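/- arXiv:2505.14865 — 7 statements merged into one kernel-verified Lean document; each statement's English description precedes it below -/
import Mathlib

section
/- Let n = 2^(2^ν) + 1 be prime with ν ≥ 2, and let F₁ be a set of nonzero residues modulo n. Suppose there is a constant μ such that for every nonzero residue r modulo n, the number (1 if r ∈ F₁ else 0) + #{(a,b) ∈ F₁ × F₁ : a + b ≡ r (mod n)} equals μ (i.e., the multiset F₁ + F₁² covers every nonzero residue the same number of times). Then F₁ is closed under doubling: for every a ∈ F₁, the residue 2a mod n also belongs to F₁. -/
/-!
Write `N(r)` for the number of ordered pairs of `F₁ × F₁` with sum `r`. Swapping the entries is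
an involution on the pairs with sum `2a` whose only possible fixed point is `(a, a)`, so
`N(2a) ≡ [a ∈ F₁] (mod 2)`, and the covering condition at `2a` gives
`[2a ∈ F₁] + [a ∈ F₁] ≡ μ (mod 2)`. For even `μ` this is the claim.

For odd `μ` we get `a ∈ F₁ ↔ 2a ∉ F₁`. Then `F₁` is stable under multiplication by `4`, hence
by `4 ^ 2 ^ (ν - 1) = -1`, and doubling exchanges `F₁` with its complement among the nonzero
residues, so `2 |F₁| = n - 1`. Summing the covering condition over `r ≠ 0`, with the `|F₁|`
pairs `(a, -a)` accounting for `r = 0`, gives `|F₁|² = (n - 1) μ`. Hence `n - 1 = 4 μ`, which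
forces `μ = 2 ^ (2 ^ ν - 2)` to be even as `ν ≥ 2`.
-/

open Finset

theorem Finset.even_card_of_involution {ι : Type*} {s : Finset ι} (g : ι → ι)
    (hg : ∀ a ∈ s, g a ≠ a) (g_mem : ∀ a ∈ s, g a ∈ s) (hgg : ∀ a ∈ s, g (g a) = a) :
    Even #s := by
  rw [← ZMod.natCast_eq_zero_iff_even, card_eq_sum_ones, Nat.cast_sum, Nat.cast_one]
  exact sum_involution (fun a _ => g a) (fun _ _ => by decide) (fun a ha _ => hg a ha) g_mem hgg

section AddCommGroup

variable {G : Type*} [AddCommGroup G] [DecidableEq G]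

def sumPairs (F : Finset G) (r : G) : Finset (G × G) :=
  (F ×ˢ F).filter (fun p => p.1 + p.2 = r)

theorem even_card_sumPairs_iff {F : Finset G} {r c : G} (hc : ∀ x, x + x = r ↔ x = c) :
    Even #(sumPairs F r) ↔ c ∉ F := by
  rw [← card_filter_add_card_filter_not (fun p : G × G => p.1 = p.2)]
  have hdiag : (sumPairs F r).filter (fun p => p.1 = p.2) = if c ∈ F then {(c, c)} else ∅ := by
    ext ⟨x, y⟩
    split_ifs <;> simp [sumPairs] <;> grind
  have hoff : Even #((sumPairs F r).filter (fun p => p.1 ≠ p.2)) :=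
    even_card_of_involution Prod.swap (fun p hp h => (mem_filter.1 hp).2 (congrArg Prod.fst h).symm)
      (fun p hp => by simp_all [sumPairs, add_comm, eq_comm]) (fun p _ => p.swap_swap)
  rw [hdiag, Nat.even_add, iff_true_intro hoff, iff_true]
  split_ifs <;> simp_all

theorem card_sumPairs_zero {F : Finset G} (hneg : ∀ a ∈ F, -a ∈ F) : #(sumPairs F 0) = #F := by
  have : sumPairs F 0 = F.image (fun a => (a, -a)) := by
    ext ⟨a, b⟩
    simp only [sumPairs, mem_filter, mem_product, mem_image, Prod.mk.injEq, add_eq_zero_iff_eq_neg']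
    grind
  rw [this, card_image_of_injective _ fun a b h => congrArg Prod.fst h]

theorem sum_card_sumPairs [Fintype G] (F : Finset G) : ∑ r, #(sumPairs F r) = #F * #F := by
  rw [← card_product]
  exact (card_eq_sum_card_fiberwise fun _ _ => mem_univ _).symm

theorem card_mul_card_eq_of_covering [Fintype G] {F : Finset G} {μ : ℕ} (h0 : 0 ∉ F)
    (hneg : ∀ a ∈ F, -a ∈ F)
    (hcov : ∀ r ≠ 0, (if r ∈ F then 1 else 0) + #(sumPairs F r) = μ) :
    #F * #F = (Fintype.card G - 1) * μ := by
  have htotal : ∑ r, ((if r ∈ F then 1 else 0) + #(sumPairs F r)) =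
      #F + (Fintype.card G - 1) * μ := by
    rw [← add_sum_erase _ _ (mem_univ 0), if_neg h0, zero_add, card_sumPairs_zero hneg,
      sum_congr rfl fun r hr => hcov r (ne_of_mem_erase hr), sum_const,
      card_erase_of_mem (mem_univ _), card_univ, smul_eq_mul]
  rw [sum_add_distrib, sum_boole, sum_card_sumPairs, filter_univ_mem, Nat.cast_id] at htotal
  omega

end AddCommGroup

section CommRing

variable {R : Type*} [CommRing R] {F : Finset R}

theorem even_iff_two_mul_mem_iff_mem [DecidableEq R] (h2 : IsLeftRegular (2 : R))
    {a : R} {μ : ℕ} (hcov : (if 2 * a ∈ F then 1 else 0) + #(sumPairs F (2 * a)) = μ) :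
    Even μ ↔ (2 * a ∈ F ↔ a ∈ F) := by
  have hhalf : ∀ x, x + x = 2 * a ↔ x = a := fun x => by rw [← two_mul]; exact h2.eq_iff
  rw [← hcov, Nat.even_add, even_card_sumPairs_iff hhalf]
  split_ifs <;> simp_all

theorem four_pow_mul_mem_iff (h2 : IsLeftRegular (2 : R))
    (hswap : ∀ a ≠ 0, a ∈ F ↔ 2 * a ∉ F) (k : ℕ) {a : R} (ha : a ≠ 0) :
    4 ^ k * a ∈ F ↔ a ∈ F := by
  induction k generalizing a with
  | zero => rw [pow_zero, one_mul]
  | succ k ih =>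
    have h2a : 2 * a ≠ 0 := mt h2.mul_left_eq_zero_iff.1 ha
    have h4a : 2 * (2 * a) ≠ 0 := mt h2.mul_left_eq_zero_iff.1 h2a
    rw [pow_succ, mul_assoc, show (4 : R) * a = 2 * (2 * a) by ring, ih h4a, hswap a ha,
      hswap _ h2a, not_not]

theorem two_mul_card_eq [Fintype R] [DecidableEq R] (h2 : IsLeftRegular (2 : R)) (h0 : 0 ∉ F)
    (hswap : ∀ a ≠ 0, a ∈ F ↔ 2 * a ∉ F) : 2 * #F = Fintype.card R - 1 := by
  have hF : F ⊆ univ.erase 0 := fun a ha =>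
    mem_erase.2 ⟨ne_of_mem_of_not_mem ha h0, mem_univ a⟩
  have hFC : #F ≤ #(univ.erase 0 \ F) := by
    refine card_le_card_of_injOn (2 * ·) (fun a ha => ?_) h2.injOn
    have ha0 := ne_of_mem_of_not_mem ha h0
    simpa [mt h2.mul_left_eq_zero_iff.1 ha0] using (hswap a ha0).1 ha
  have hCF : #(univ.erase 0 \ F) ≤ #F := by
    refine card_le_card_of_injOn (2 * ·) (fun a ha => ?_) h2.injOn
    simp only [coe_sdiff, coe_erase, coe_univ, Set.mem_sdiff, mem_coe] at ha
    simpa using not_imp_comm.1 (hswap a ha.1.2).2 ha.2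
  have hN : #(univ.erase (0 : R)) = Fintype.card R - 1 := by
    rw [card_erase_of_mem (mem_univ _), card_univ]
  have hsdiff := card_sdiff_of_subset hF
  have hle := card_le_card hF
  omega

theorem card_eq_four_mul_add_one [Fintype R] [DecidableEq R] [Nontrivial R]
    (h2 : IsLeftRegular (2 : R)) (h0 : 0 ∉ F) (hswap : ∀ a ≠ 0, a ∈ F ↔ 2 * a ∉ F)
    (hneg : ∀ a ∈ F, -a ∈ F) {μ : ℕ}
    (hcov : ∀ r ≠ 0, (if r ∈ F then 1 else 0) + #(sumPairs F r) = μ) :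
    Fintype.card R = 4 * μ + 1 := by
  have hsq := card_mul_card_eq_of_covering h0 hneg hcov
  have hhalf := two_mul_card_eq h2 h0 hswap
  have hpos : 0 < #F := by have := Fintype.one_lt_card (α := R); omega
  have : #F = 2 * μ := Nat.eq_of_mul_eq_mul_left hpos (by rw [hsq, ← hhalf]; ring)
  omega

end CommRing

theorem ZMod.isLeftRegular_two {n : ℕ} (hn : Odd n) : IsLeftRegular (2 : ZMod n) := by
  simpa using ((ZMod.isUnit_iff_coprime 2 n).2 (Nat.coprime_two_left.2 hn)).isRegular.left

theorem ZMod.four_pow_eq_neg_one {ν : ℕ} (hν : 1 ≤ ν) :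
    (4 : ZMod (2 ^ 2 ^ ν + 1)) ^ 2 ^ (ν - 1) = -1 := by
  have h : ((2 ^ 2 ^ ν + 1 : ℕ) : ZMod (2 ^ 2 ^ ν + 1)) = 0 := ZMod.natCast_self _
  push_cast at h
  rw [show (4 : ZMod _) = 2 ^ 2 by norm_num, ← pow_mul, ← pow_succ', Nat.sub_add_cancel hν]
  exact eq_neg_of_add_eq_zero_left h

theorem stmt0_general (ν n : ℕ) (hν : 2 ≤ ν) (hn : n = 2 ^ (2 ^ ν) + 1)
    (F₁ : Finset (ZMod n)) (hF₁ : ∀ a ∈ F₁, a ≠ 0) (μ : ℕ)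
    (hcov : ∀ r : ZMod n, r ≠ 0 →
      (if r ∈ F₁ then 1 else 0) +
        ((F₁ ×ˢ F₁).filter (fun p => p.1 + p.2 = r)).card = μ) :
    ∀ a ∈ F₁, 2 * a ∈ F₁ := by
  subst hn
  have h2 : IsLeftRegular (2 : ZMod (2 ^ 2 ^ ν + 1)) :=
    ZMod.isLeftRegular_two (Nat.even_pow.2 ⟨even_two, by positivity⟩).add_one
  have h0 : 0 ∉ F₁ := fun h => hF₁ 0 h rfl
  have hpar : ∀ a ≠ 0, Even μ ↔ (2 * a ∈ F₁ ↔ a ∈ F₁) := fun a ha =>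
    even_iff_two_mul_mem_iff_mem h2 (hcov _ (mt h2.mul_left_eq_zero_iff.1 ha))
  obtain hμ | ⟨k, rfl⟩ := Nat.even_or_odd μ
  · exact fun a ha => ((hpar a (hF₁ a ha)).1 hμ).2 ha
  have hswap : ∀ a ≠ 0, a ∈ F₁ ↔ 2 * a ∉ F₁ := fun a ha => by
    have := (hpar a ha).not.1 (Nat.not_even_two_mul_add_one k)
    tauto
  have hneg : ∀ a ∈ F₁, -a ∈ F₁ := fun a ha => by
    rwa [← neg_one_mul, ← ZMod.four_pow_eq_neg_one (by omega),
      four_pow_mul_mem_iff h2 hswap _ (hF₁ a ha)]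
  have : Fact (1 < 2 ^ 2 ^ ν + 1) := ⟨Nat.lt_add_of_pos_left (by positivity)⟩
  have hcard := card_eq_four_mul_add_one h2 h0 hswap hneg hcov
  rw [ZMod.card] at hcard
  have h16 : 2 ^ 2 ^ 2 ∣ 2 ^ 2 ^ ν := pow_dvd_pow 2 (Nat.pow_le_pow_right two_pos hν)
  omega

/-- If `n = 2 ^ 2 ^ ν + 1` is prime (`ν ≥ 2`) and `F₁` is a set of nonzero
residues mod `n` such that the multiset `F₁ + F₁²` covers every nonzero residue the same
number `μ` of times, then `F₁` is closed under doubling. -/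
theorem stmt0 (ν n : ℕ) (hν : 2 ≤ ν) (hn : n = 2 ^ (2 ^ ν) + 1) (hp : n.Prime)
    (F₁ : Finset (ZMod n)) (hF₁ : ∀ a ∈ F₁, a ≠ 0) (μ : ℕ)
    (hcov : ∀ r : ZMod n, r ≠ 0 →
      (if r ∈ F₁ then 1 else 0) +
        ((F₁ ×ˢ F₁).filter (fun p => p.1 + p.2 = r)).card = μ) :
    ∀ a ∈ F₁, 2 * a ∈ F₁ :=
  stmt0_general ν n hν hn F₁ hF₁ μ hcov
end

section
/- Let n = 2^(2^ν) + 1 be prime with ν ≥ 1, and let G and H be two distinct doubling orbits of nonzero residues modulo n. Fix any k₁ ∈ G. Then: (i) g + h ≠ 0 for all g ∈ G, h ∈ H; and (ii) for every nonzero residue r modulo n, the number of ordered pairs (g,h) ∈ G × H with g + h = r equals the number of elements m ∈ H such that r lies in the doubling orbit of k₁ + m. In particular, the multiset of all sums g + h (g ∈ G, h ∈ H) is the disjoint multiset union of 2^(ν+1) doubling orbits. -/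
/-!
Once `2` has finite order modulo `n`, the doubling orbits are the cosets of the subgroup
generated by `2`, so lying in a common orbit is an equivalence relation. If `2 ^ N = -1`, then
`-g` lies in the orbit of `g`, so `g + h = 0` would put `h` in the orbit of `g`. For the count,
fix `k` in the orbit `G` of `a`: rescaling a pair `(g, h) ∈ G × H` with `g + h = r` by the power
of two `k / g` gives `m = h * (k / g) ∈ H` with `k + m = r * (k / g)`, and modulo a prime this
is a bijection onto the `m ∈ H` with `r` in the orbit of `k + m`.
-/

/-- The doubling orbit of a residue `a` modulo `n`: the set `{a * 2 ^ j : j ∈ ℕ}`. -/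
def dOrbit {n : ℕ} (a : ZMod n) : Set (ZMod n) := Set.range fun j : ℕ => a * 2 ^ j

namespace dOrbit

variable {n : ℕ}

theorem mul_two_pow_mem {a x : ZMod n} (hx : x ∈ dOrbit a) (j : ℕ) : x * 2 ^ j ∈ dOrbit a := by
  obtain ⟨i, rfl⟩ := hx
  exact ⟨i + j, by simp only [pow_add, mul_assoc]⟩

theorem mem_trans {a x y : ZMod n} (hx : x ∈ dOrbit a) (hy : y ∈ dOrbit x) : y ∈ dOrbit a := by
  obtain ⟨j, rfl⟩ := hy
  exact mul_two_pow_mem hx j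

theorem ne_zero_of_mem (h2 : IsOfFinOrder (2 : ZMod n)) {a x : ZMod n} (ha : a ≠ 0)
    (hx : x ∈ dOrbit a) : x ≠ 0 := by
  obtain ⟨i, rfl⟩ := hx
  rwa [Ne, (h2.isUnit.pow i).mul_left_eq_zero]

theorem mem_symm (h2 : IsOfFinOrder (2 : ZMod n)) {a x : ZMod n} (hx : x ∈ dOrbit a) :
    a ∈ dOrbit x := by
  obtain ⟨i, rfl⟩ := hx
  refine ⟨i * (orderOf (2 : ZMod n) - 1), ?_⟩
  have hord : i + i * (orderOf (2 : ZMod n) - 1) = orderOf (2 : ZMod n) * i := by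
    obtain ⟨c, hc⟩ := Nat.exists_eq_succ_of_ne_zero h2.orderOf_pos.ne'
    rw [hc, Nat.succ_sub_one, Nat.succ_mul]
    ring
  show a * 2 ^ i * 2 ^ _ = a
  rw [mul_assoc, ← pow_add, hord, pow_mul, pow_orderOf_eq_one, one_pow, mul_one]

theorem eq_of_mem (h2 : IsOfFinOrder (2 : ZMod n)) {a x : ZMod n} (hx : x ∈ dOrbit a) :
    dOrbit x = dOrbit a :=
  Set.ext fun _ => ⟨mem_trans hx, mem_trans (mem_symm h2 hx)⟩

theorem add_ne_zero {N : ℕ} (h2 : IsOfFinOrder (2 : ZMod n)) (hN : (2 : ZMod n) ^ N = -1)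
    {a b g h : ZMod n} (hab : dOrbit a ≠ dOrbit b) (hg : g ∈ dOrbit a) (hh : h ∈ dOrbit b) :
    g + h ≠ 0 := by
  intro hgh
  have hneg : h = g * 2 ^ N := by rw [hN, mul_neg_one]; exact eq_neg_of_add_eq_zero_right hgh
  have hha : h ∈ dOrbit a := hneg ▸ mul_two_pow_mem hg N
  exact hab ((eq_of_mem h2 hha).symm.trans (eq_of_mem h2 hh))

theorem ncard_pairs_add_eq [Fact n.Prime] (h2 : IsOfFinOrder (2 : ZMod n)) {a b k r : ZMod n}
    (ha : a ≠ 0) (hk : k ∈ dOrbit a) (hr : r ≠ 0) :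
    {p : ZMod n × ZMod n | p.1 ∈ dOrbit a ∧ p.2 ∈ dOrbit b ∧ p.1 + p.2 = r}.ncard =
      {m : ZMod n | m ∈ dOrbit b ∧ r ∈ dOrbit (k + m)}.ncard := by
  set S := {p : ZMod n × ZMod n | p.1 ∈ dOrbit a ∧ p.2 ∈ dOrbit b ∧ p.1 + p.2 = r}
  have hk0 : k ≠ 0 := ne_zero_of_mem h2 ha hk
  have hsum : ∀ p ∈ S, k + p.2 * (k / p.1) = r * (k / p.1) := by
    rintro ⟨g, h⟩ ⟨hg, -, hgh⟩
    have hg0 : g ≠ 0 := ne_zero_of_mem h2 ha hg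
    dsimp only at hgh ⊢
    rw [← hgh]
    field_simp
  have hinj : Set.InjOn (fun p : ZMod n × ZMod n => p.2 * (k / p.1)) S := by
    rintro ⟨g₁, h₁⟩ hp₁ ⟨g₂, h₂⟩ hp₂ heq
    have hscale : r * (k / g₁) = r * (k / g₂) := by
      rw [← hsum _ hp₁, ← hsum _ hp₂]; exact congrArg (k + ·) heq
    have hg : g₁ = g₂ :=
      inv_injective (mul_left_cancel₀ hk0 (mul_left_cancel₀ hr hscale))
    have hh : h₁ = h₂ := add_left_cancel (hp₁.2.2.trans (hg ▸ hp₂.2.2).symm)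
    rw [hg, hh]
  rw [← hinj.ncard_image]
  congr 1
  ext m
  constructor
  · rintro ⟨⟨g, h⟩, hp, rfl⟩
    obtain ⟨s, hs⟩ : k ∈ dOrbit g := eq_of_mem h2 hp.1 ▸ hk
    have hkg : k / g = 2 ^ s := by
      rw [← hs, mul_div_cancel_left₀ _ (ne_zero_of_mem h2 ha hp.1)]
    refine ⟨show h * (k / g) ∈ dOrbit b by rw [hkg]; exact mul_two_pow_mem hp.2.1 s,
      mem_symm h2 ?_⟩
    rw [hsum _ hp, hkg]
    exact ⟨s, rfl⟩
  · rintro ⟨hm, s, hs⟩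
    refine ⟨(k * 2 ^ s, m * 2 ^ s), ⟨mul_two_pow_mem hk s, mul_two_pow_mem hm s, ?_⟩, ?_⟩
    · rw [← hs]; exact (add_mul _ _ _).symm
    · have h2s : (2 : ZMod n) ^ s ≠ 0 := (h2.isUnit.pow s).ne_zero
      show m * 2 ^ s * (k / (k * 2 ^ s)) = m
      field_simp

end dOrbit

theorem stmt4_general (ν n : ℕ) (hn : n = 2 ^ (2 ^ ν) + 1) (hp : n.Prime)
    (a b : ZMod n) (ha : a ≠ 0) (hab : dOrbit a ≠ dOrbit b)
    (k₁ : ZMod n) (hk₁ : k₁ ∈ dOrbit a) :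
    (∀ g ∈ dOrbit a, ∀ h ∈ dOrbit b, g + h ≠ 0) ∧
    (∀ r : ZMod n, r ≠ 0 →
      {p : ZMod n × ZMod n | p.1 ∈ dOrbit a ∧ p.2 ∈ dOrbit b ∧ p.1 + p.2 = r}.ncard =
        {m : ZMod n | m ∈ dOrbit b ∧ r ∈ dOrbit (k₁ + m)}.ncard) := by
  have : Fact n.Prime := ⟨hp⟩
  have hN : (2 : ZMod n) ^ 2 ^ ν = -1 := by
    have h0 : ((2 ^ 2 ^ ν + 1 : ℕ) : ZMod n) = 0 := hn ▸ ZMod.natCast_self n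
    push_cast at h0
    exact eq_neg_of_add_eq_zero_left h0
  have h2 : IsOfFinOrder (2 : ZMod n) :=
    isOfFinOrder_iff_pow_eq_one.mpr ⟨2 ^ ν * 2, by positivity, by rw [pow_mul, hN]; norm_num⟩
  exact ⟨fun g hg h hh => dOrbit.add_ne_zero h2 hN hab hg hh,
    fun r hr => dOrbit.ncard_pairs_add_eq h2 ha hk₁ hr⟩

/-- For a Fermat prime `n = 2 ^ 2 ^ ν + 1` (`ν ≥ 1`) and two distinct
doubling orbits `G = dOrbit a`, `H = dOrbit b` of nonzero residues, with `k₁ ∈ G`: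
(i) `g + h ≠ 0` for all `g ∈ G`, `h ∈ H`; and (ii) for every nonzero residue `r`, the number
of ordered pairs `(g, h) ∈ G × H` with `g + h = r` equals the number of `m ∈ H` such that
`r` lies in the doubling orbit of `k₁ + m`. -/
theorem stmt4 (ν n : ℕ) (hν : 1 ≤ ν) (hn : n = 2 ^ (2 ^ ν) + 1) (hp : n.Prime)
    (a b : ZMod n) (ha : a ≠ 0) (hb : b ≠ 0) (hab : dOrbit a ≠ dOrbit b)
    (k₁ : ZMod n) (hk₁ : k₁ ∈ dOrbit a) :
    (∀ g ∈ dOrbit a, ∀ h ∈ dOrbit b, g + h ≠ 0) ∧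
    (∀ r : ZMod n, r ≠ 0 →
      {p : ZMod n × ZMod n | p.1 ∈ dOrbit a ∧ p.2 ∈ dOrbit b ∧ p.1 + p.2 = r}.ncard =
        {m : ZMod n | m ∈ dOrbit b ∧ r ∈ dOrbit (k₁ + m)}.ncard) :=
  stmt4_general ν n hn hp a b ha hab k₁ hk₁
end

section
/- Let n = 2^(2^ν) + 1 be prime with ν ≥ 1, let G be a doubling orbit of nonzero residues modulo n, and fix k₁ ∈ G. Then: (i) the number of ordered pairs (g,g') ∈ G × G with g + g' = 0 equals 2^(ν+1); and (ii) for every nonzero residue r modulo n, the number of ordered pairs (g,g') ∈ G × G with g + g' = r equals the number of elements m ∈ G with m ≠ −k₁ such that r lies in the doubling orbit of k₁ + m. In particular, the multiset of sums of pairs from G is the multiset union of 2^(ν+1) − 1 doubling orbits together with 0 taken 2^(ν+1) times. -/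
private lemma dOrbit_shift {n : ℕ} {a x : ZMod n} (hx : x ∈ dOrbit a) (j : ℕ) :
    x * 2 ^ j ∈ dOrbit a := by
  obtain ⟨i, rfl⟩ := hx
  exact ⟨i + j, by show a * 2 ^ (i + j) = a * 2 ^ i * 2 ^ j; rw [pow_add, mul_assoc]⟩

private lemma dOrbit_rev {n : ℕ} {T : ℕ} (hT : (2 : ZMod n) ^ T = 1) (hTpos : 1 ≤ T)
    {a x y : ZMod n} (hx : x ∈ dOrbit a) (hy : y ∈ dOrbit a) :
    ∃ j, x * 2 ^ j = y := by
  obtain ⟨T', rfl⟩ := Nat.exists_eq_add_of_le hTpos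
  obtain ⟨i, rfl⟩ := hx
  obtain ⟨k, rfl⟩ := hy
  refine ⟨k + i * T', ?_⟩
  show a * 2 ^ i * 2 ^ (k + i * T') = a * 2 ^ k
  have h1 : (2 : ZMod n) ^ (i + (k + i * T')) = 2 ^ k := by
    have h2 : i + (k + i * T') = k + (1 + T') * i := by ring
    rw [h2, pow_add, pow_mul, hT, one_pow, mul_one]
  rw [mul_assoc, ← pow_add, h1]

/-- For a Fermat prime `n = 2 ^ 2 ^ ν + 1` (`ν ≥ 1`), a doubling orbit
`G = dOrbit a` of a nonzero residue `a`, and `k₁ ∈ G`: (i) the number of ordered pairs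
`(g, g') ∈ G × G` with `g + g' = 0` equals `2 ^ (ν + 1)`; and (ii) for every nonzero residue
`r`, the number of ordered pairs `(g, g') ∈ G × G` with `g + g' = r` equals the number of
`m ∈ G` with `m ≠ -k₁` such that `r` lies in the doubling orbit of `k₁ + m`. -/
theorem stmt5 (ν n : ℕ) (hν : 1 ≤ ν) (hn : n = 2 ^ (2 ^ ν) + 1) (hp : n.Prime)
    (a : ZMod n) (ha : a ≠ 0) (k₁ : ZMod n) (hk₁ : k₁ ∈ dOrbit a) :
    {p : ZMod n × ZMod n | p.1 ∈ dOrbit a ∧ p.2 ∈ dOrbit a ∧ p.1 + p.2 = 0}.ncard =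
      2 ^ (ν + 1) ∧
    (∀ r : ZMod n, r ≠ 0 →
      {p : ZMod n × ZMod n | p.1 ∈ dOrbit a ∧ p.2 ∈ dOrbit a ∧ p.1 + p.2 = r}.ncard =
        {m : ZMod n | m ∈ dOrbit a ∧ m ≠ -k₁ ∧ r ∈ dOrbit (k₁ + m)}.ncard) := by
  haveI : Fact n.Prime := ⟨hp⟩
  have hn5 : 5 ≤ n := by
    subst hn
    have h1 : (2:ℕ) ≤ 2 ^ ν := by
      calc (2:ℕ) = 2 ^ 1 := rfl
        _ ≤ 2 ^ ν := Nat.pow_le_pow_right (by norm_num) hν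
    have h2 : (2:ℕ) ^ 2 ≤ 2 ^ 2 ^ ν := Nat.pow_le_pow_right (by norm_num) h1
    omega
  have h2ne : (2 : ZMod n) ≠ 0 := by
    intro h
    have h' : ((2:ℕ) : ZMod n) = 0 := by exact_mod_cast h
    rw [ZMod.natCast_eq_zero_iff] at h'
    have := Nat.le_of_dvd (by norm_num) h'
    omega
  have hneg : (2 : ZMod n) ^ 2 ^ ν = -1 := by
    have h0 : ((2 ^ 2 ^ ν + 1 : ℕ) : ZMod n) = 0 := by rw [← hn]; exact ZMod.natCast_self n
    push_cast at h0
    linear_combination h0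
  have hT : (2 : ZMod n) ^ 2 ^ (ν + 1) = 1 := by
    rw [pow_succ, pow_mul, hneg]; ring
  have hTpos : 1 ≤ 2 ^ (ν + 1) := Nat.one_le_two_pow
  haveI : Fact (Nat.Prime 2) := ⟨Nat.prime_two⟩
  have hord : orderOf (2 : ZMod n) = 2 ^ (ν + 1) := by
    apply orderOf_eq_prime_pow
    · rw [hneg]
      intro h
      apply h2ne
      linear_combination -h
    · exact hT
  have hpowne : ∀ j : ℕ, (2 : ZMod n) ^ j ≠ 0 := fun j => pow_ne_zero j h2ne
  have hpowmod : ∀ j : ℕ, (2 : ZMod n) ^ j = 2 ^ (j % 2 ^ (ν + 1)) := by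
    intro j
    conv_lhs => rw [← Nat.div_add_mod j (2 ^ (ν + 1))]
    rw [pow_add, pow_mul, hT, one_pow, one_mul]
  have hpowinj : ∀ i j : ℕ, i < 2 ^ (ν + 1) → j < 2 ^ (ν + 1) →
      (2 : ZMod n) ^ i = 2 ^ j → i = j := by
    have key : ∀ i j : ℕ, i ≤ j → j < 2 ^ (ν + 1) → (2 : ZMod n) ^ i = 2 ^ j → i = j := by
      intro i j hij hj h
      have h1 : (2 : ZMod n) ^ i * 2 ^ (j - i) = 2 ^ i * 1 := by
        rw [mul_one, ← pow_add, Nat.add_sub_cancel' hij, h]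
      have h2 : (2 : ZMod n) ^ (j - i) = 1 := mul_left_cancel₀ (hpowne i) h1
      have h3 : 2 ^ (ν + 1) ∣ j - i := hord ▸ orderOf_dvd_of_pow_eq_one h2
      have h4 : j - i = 0 := Nat.eq_zero_of_dvd_of_lt h3 (by omega)
      omega
    intro i j hi hj h
    rcases Nat.le_total i j with hle | hle
    · exact key i j hle hj h
    · exact (key j i hle hi h.symm).symm
  -- cardinality of an orbit of a nonzero element
  have hGcard : ∀ b : ZMod n, b ≠ 0 → (dOrbit b).ncard = 2 ^ (ν + 1) := by
    intro b hb
    have heq : dOrbit b = (fun j : ℕ => b * 2 ^ j) '' ↑(Finset.range (2 ^ (ν + 1))) := by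
      ext x
      constructor
      · rintro ⟨j, rfl⟩
        refine ⟨j % 2 ^ (ν + 1), by simpa using Nat.mod_lt _ hTpos, ?_⟩
        show b * 2 ^ (j % 2 ^ (ν + 1)) = b * 2 ^ j
        rw [hpowmod j]
      · rintro ⟨j, _, rfl⟩
        exact ⟨j, rfl⟩
    rw [heq, Set.ncard_image_of_injOn, Set.ncard_coe_finset, Finset.card_range]
    intro i hi j hj hij
    simp only [Finset.coe_range, Set.mem_Iio] at hi hj
    have h2 : (2 : ZMod n) ^ i = 2 ^ j := mul_left_cancel₀ hb hij
    exact hpowinj i j hi hj h2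
  have hnegmem : ∀ x ∈ dOrbit a, -x ∈ dOrbit a := by
    intro x hx
    have := dOrbit_shift hx (2 ^ ν)
    rwa [hneg, mul_neg_one] at this
  constructor
  · -- part (i)
    have hset : {p : ZMod n × ZMod n | p.1 ∈ dOrbit a ∧ p.2 ∈ dOrbit a ∧ p.1 + p.2 = 0} =
        (fun g : ZMod n => (g, -g)) '' dOrbit a := by
      ext ⟨x, y⟩
      simp only [Set.mem_setOf_eq, Set.mem_image, Prod.mk.injEq]
      constructor
      · rintro ⟨hx, hy, hxy⟩
        exact ⟨x, hx, rfl, by linear_combination -hxy⟩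
      · rintro ⟨g, hg, rfl, rfl⟩
        exact ⟨hg, hnegmem g hg, by ring⟩
    rw [hset, Set.ncard_image_of_injective _ (fun x y h => (Prod.mk.injEq _ _ _ _ ▸ h).1),
      hGcard a ha]
  · -- part (ii)
    intro r hr
    have hk₁ne : k₁ ≠ 0 := by
      obtain ⟨i, rfl⟩ := hk₁
      exact mul_ne_zero ha (hpowne i)
    set S := {m : ZMod n | m ∈ dOrbit a ∧ m ≠ -k₁ ∧ r ∈ dOrbit (k₁ + m)} with hS
    set f : ZMod n → ZMod n × ZMod n := fun m => (k₁ * (r / (k₁ + m)), m * (r / (k₁ + m)))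
      with hf
    have hbij : Set.BijOn f S
        {p : ZMod n × ZMod n | p.1 ∈ dOrbit a ∧ p.2 ∈ dOrbit a ∧ p.1 + p.2 = r} := by
      refine ⟨?_, ?_, ?_⟩
      · rintro m ⟨hm, hmne, j, hj⟩
        have hkm : k₁ + m ≠ 0 := fun h => hmne (by linear_combination h)
        have hj' : (k₁ + m) * 2 ^ j = r := hj
        have hdiv : r / (k₁ + m) = 2 ^ j := by
          rw [← hj']
          exact mul_div_cancel_left₀ _ hkm
        refine ⟨?_, ?_, ?_⟩
        · show k₁ * (r / (k₁ + m)) ∈ dOrbit a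
          rw [hdiv]; exact dOrbit_shift hk₁ j
        · show m * (r / (k₁ + m)) ∈ dOrbit a
          rw [hdiv]; exact dOrbit_shift hm j
        · show k₁ * (r / (k₁ + m)) + m * (r / (k₁ + m)) = r
          rw [hdiv]
          linear_combination hj'
      · rintro m₁ ⟨_, hm₁ne, _⟩ m₂ ⟨_, hm₂ne, _⟩ hfeq
        have hkm₁ : k₁ + m₁ ≠ 0 := fun h => hm₁ne (by linear_combination h)
        have hkm₂ : k₁ + m₂ ≠ 0 := fun h => hm₂ne (by linear_combination h)
        have h1 : k₁ * (r / (k₁ + m₁)) = k₁ * (r / (k₁ + m₂)) :=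
          congrArg Prod.fst hfeq
        have h2 : r / (k₁ + m₁) = r / (k₁ + m₂) := mul_left_cancel₀ hk₁ne h1
        rw [div_eq_div_iff hkm₁ hkm₂] at h2
        have h3 : k₁ + m₂ = k₁ + m₁ := mul_left_cancel₀ hr h2
        exact (add_left_cancel h3).symm
      · rintro ⟨x, y⟩ ⟨hx, hy, hxy⟩
        obtain ⟨j, hj⟩ := dOrbit_rev hT hTpos hk₁ hx
        obtain ⟨j', hj'⟩ := dOrbit_rev hT hTpos hy (dOrbit_shift hy (j * (2 ^ (ν + 1) - 1)))
        -- m := y * 2 ^ (j * (2^(ν+1)-1)) satisfies m * 2 ^ j = y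
        set m := y * 2 ^ (j * (2 ^ (ν + 1) - 1)) with hm
        have hmy : m * 2 ^ j = y := by
          rw [hm, mul_assoc, ← pow_add]
          have he : j * (2 ^ (ν + 1) - 1) + j = j * 2 ^ (ν + 1) := by
            cases' Nat.exists_eq_add_of_le hTpos with T' hT'
            rw [hT', Nat.add_sub_cancel_left]
            ring
          rw [he, pow_mul', hT, one_pow, mul_one]
        have hsum : (k₁ + m) * 2 ^ j = r := by
          rw [add_mul, hmy, hj, hxy]
        have hkm : k₁ + m ≠ 0 := by
          intro h
          rw [h, zero_mul] at hsum
          exact hr hsum.symm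
        have hdiv : r / (k₁ + m) = 2 ^ j := by
          rw [← hsum]
          exact mul_div_cancel_left₀ _ hkm
        refine ⟨m, ⟨dOrbit_shift hy _, fun h => hkm (by linear_combination h), ⟨j, hsum⟩⟩, ?_⟩
        show (k₁ * (r / (k₁ + m)), m * (r / (k₁ + m))) = (x, y)
        rw [hdiv, hj, hmy]
    rw [← hbij.image_eq, Set.ncard_image_of_injOn hbij.injOn]
end

section
/- 2·cos(2π/17) + 2·cos(4π/17) + 2·cos(8π/17) + 2·cos(16π/17) = (−1 + √17)/2. -/
/-- `2 cos(2π/17) + 2 cos(4π/17) + 2 cos(8π/17) + 2 cos(16π/17)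
= (-1 + √17) / 2`. -/
theorem stmt14 :
    2 * Real.cos (2 * Real.pi / 17) + 2 * Real.cos (4 * Real.pi / 17) +
      2 * Real.cos (8 * Real.pi / 17) + 2 * Real.cos (16 * Real.pi / 17) =
    (-1 + Real.sqrt 17) / 2 := by
  set θ : ℝ := Real.pi / 17 with hθ
  clear_value θ
  have hpi : (0:ℝ) < Real.pi := Real.pi_pos
  have hθpos : 0 < θ := by rw [hθ]; positivity
  -- product-to-sum helper
  have hp : ∀ a b : ℝ, Real.cos a * Real.cos b =
      (Real.cos (a + b) + Real.cos (a - b)) / 2 := by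
    intro a b; rw [Real.cos_add, Real.cos_sub]; ring
  -- reduction lemmas
  have h18 : Real.cos (18 * θ) = Real.cos (16 * θ) := by
    rw [show 18 * θ = Real.pi + θ by rw [hθ]; ring,
        show 16 * θ = Real.pi - θ by rw [hθ]; ring,
        Real.cos_pi_sub, Real.cos_add, Real.cos_pi, Real.sin_pi]; ring
  have h20 : Real.cos (20 * θ) = Real.cos (14 * θ) := by
    rw [show 20 * θ = Real.pi + 3 * θ by rw [hθ]; ring,
        show 14 * θ = Real.pi - 3 * θ by rw [hθ]; ring,
        Real.cos_pi_sub, Real.cos_add, Real.cos_pi, Real.sin_pi]; ring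
  have h24 : Real.cos (24 * θ) = Real.cos (10 * θ) := by
    rw [show 24 * θ = Real.pi + 7 * θ by rw [hθ]; ring,
        show 10 * θ = Real.pi - 7 * θ by rw [hθ]; ring,
        Real.cos_pi_sub, Real.cos_add, Real.cos_pi, Real.sin_pi]; ring
  have h32 : Real.cos (32 * θ) = Real.cos (2 * θ) := by
    rw [show 32 * θ = 2 * Real.pi - 2 * θ by rw [hθ]; ring,
        Real.cos_sub, Real.cos_two_pi, Real.sin_two_pi]; ring
  -- squares
  have sq : ∀ a : ℝ, Real.cos a * Real.cos a = (Real.cos (a + a) + 1) / 2 := by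
    intro a
    rw [Real.cos_add]
    linear_combination (1/2) * Real.sin_sq_add_cos_sq a
  have s2 : Real.cos (2*θ) * Real.cos (2*θ) = (Real.cos (4*θ) + 1) / 2 := by
    have h := sq (2*θ); rw [show 2*θ + 2*θ = 4*θ by ring] at h; exact h
  have s4 : Real.cos (4*θ) * Real.cos (4*θ) = (Real.cos (8*θ) + 1) / 2 := by
    have h := sq (4*θ); rw [show 4*θ + 4*θ = 8*θ by ring] at h; exact h
  have s8 : Real.cos (8*θ) * Real.cos (8*θ) = (Real.cos (16*θ) + 1) / 2 := by
    have h := sq (8*θ); rw [show 8*θ + 8*θ = 16*θ by ring] at h; exact h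
  have s16 : Real.cos (16*θ) * Real.cos (16*θ) = (Real.cos (2*θ) + 1) / 2 := by
    have h := sq (16*θ); rw [show 16*θ + 16*θ = 32*θ by ring, h32] at h; exact h
  -- cross products
  have p24 : Real.cos (4*θ) * Real.cos (2*θ) = (Real.cos (6*θ) + Real.cos (2*θ)) / 2 := by
    have h := hp (4*θ) (2*θ)
    rw [show 4*θ + 2*θ = 6*θ by ring, show 4*θ - 2*θ = 2*θ by ring] at h; exact h
  have p28 : Real.cos (8*θ) * Real.cos (2*θ) = (Real.cos (10*θ) + Real.cos (6*θ)) / 2 := by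
    have h := hp (8*θ) (2*θ)
    rw [show 8*θ + 2*θ = 10*θ by ring, show 8*θ - 2*θ = 6*θ by ring] at h; exact h
  have p216 : Real.cos (16*θ) * Real.cos (2*θ) = (Real.cos (16*θ) + Real.cos (14*θ)) / 2 := by
    have h := hp (16*θ) (2*θ)
    rw [show 16*θ + 2*θ = 18*θ by ring, show 16*θ - 2*θ = 14*θ by ring, h18] at h; exact h
  have p48 : Real.cos (8*θ) * Real.cos (4*θ) = (Real.cos (12*θ) + Real.cos (4*θ)) / 2 := by
    have h := hp (8*θ) (4*θ)
    rw [show 8*θ + 4*θ = 12*θ by ring, show 8*θ - 4*θ = 4*θ by ring] at h; exact h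
  have p416 : Real.cos (16*θ) * Real.cos (4*θ) = (Real.cos (14*θ) + Real.cos (12*θ)) / 2 := by
    have h := hp (16*θ) (4*θ)
    rw [show 16*θ + 4*θ = 20*θ by ring, show 16*θ - 4*θ = 12*θ by ring, h20] at h; exact h
  have p816 : Real.cos (16*θ) * Real.cos (8*θ) = (Real.cos (10*θ) + Real.cos (8*θ)) / 2 := by
    have h := hp (16*θ) (8*θ)
    rw [show 16*θ + 8*θ = 24*θ by ring, show 16*θ - 8*θ = 8*θ by ring, h24] at h; exact h
  -- telescoping sum: 2 sin θ cos (kθ) = sin((k+1)θ) - sin((k-1)θ)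
  have tele : ∀ a : ℝ, 2 * Real.sin θ * Real.cos a = Real.sin (a + θ) - Real.sin (a - θ) := by
    intro a; rw [Real.sin_add, Real.sin_sub]; ring
  have t2 : 2 * Real.sin θ * Real.cos (2*θ) = Real.sin (3*θ) - Real.sin θ := by
    have h := tele (2*θ)
    rw [show 2*θ + θ = 3*θ by ring, show 2*θ - θ = θ by ring] at h; exact h
  have t4 : 2 * Real.sin θ * Real.cos (4*θ) = Real.sin (5*θ) - Real.sin (3*θ) := by
    have h := tele (4*θ)
    rw [show 4*θ + θ = 5*θ by ring, show 4*θ - θ = 3*θ by ring] at h; exact h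
  have t6 : 2 * Real.sin θ * Real.cos (6*θ) = Real.sin (7*θ) - Real.sin (5*θ) := by
    have h := tele (6*θ)
    rw [show 6*θ + θ = 7*θ by ring, show 6*θ - θ = 5*θ by ring] at h; exact h
  have t8 : 2 * Real.sin θ * Real.cos (8*θ) = Real.sin (9*θ) - Real.sin (7*θ) := by
    have h := tele (8*θ)
    rw [show 8*θ + θ = 9*θ by ring, show 8*θ - θ = 7*θ by ring] at h; exact h
  have t10 : 2 * Real.sin θ * Real.cos (10*θ) = Real.sin (11*θ) - Real.sin (9*θ) := by
    have h := tele (10*θ)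
    rw [show 10*θ + θ = 11*θ by ring, show 10*θ - θ = 9*θ by ring] at h; exact h
  have t12 : 2 * Real.sin θ * Real.cos (12*θ) = Real.sin (13*θ) - Real.sin (11*θ) := by
    have h := tele (12*θ)
    rw [show 12*θ + θ = 13*θ by ring, show 12*θ - θ = 11*θ by ring] at h; exact h
  have t14 : 2 * Real.sin θ * Real.cos (14*θ) = Real.sin (15*θ) - Real.sin (13*θ) := by
    have h := tele (14*θ)
    rw [show 14*θ + θ = 15*θ by ring, show 14*θ - θ = 13*θ by ring] at h; exact h
  have t16 : 2 * Real.sin θ * Real.cos (16*θ) = Real.sin (17*θ) - Real.sin (15*θ) := by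
    have h := tele (16*θ)
    rw [show 16*θ + θ = 17*θ by ring, show 16*θ - θ = 15*θ by ring] at h; exact h
  have h170 : Real.sin (17*θ) = 0 := by
    rw [show 17*θ = Real.pi by rw [hθ]; ring, Real.sin_pi]
  have hsne : Real.sin θ ≠ 0 := by
    refine ne_of_gt (Real.sin_pos_of_pos_of_lt_pi hθpos ?_)
    rw [hθ]; nlinarith [Real.pi_pos]
  -- sum of all eight cosines equals -1/2 (times 2 equals -1)
  have key : 2*Real.cos (2*θ) + 2*Real.cos (4*θ) + 2*Real.cos (6*θ) + 2*Real.cos (8*θ)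
      + 2*Real.cos (10*θ) + 2*Real.cos (12*θ) + 2*Real.cos (14*θ) + 2*Real.cos (16*θ)
      = -1 := by
    apply mul_left_cancel₀ hsne
    linear_combination t2 + t4 + t6 + t8 + t10 + t12 + t14 + t16 + h170
  set x : ℝ := 2*Real.cos (2*θ) + 2*Real.cos (4*θ) + 2*Real.cos (8*θ) + 2*Real.cos (16*θ)
    with hx
  clear_value x
  have hquad : x^2 + x - 4 = 0 := by
    rw [hx]
    linear_combination 4*s2 + 4*s4 + 4*s8 + 4*s16 + 8*p24 + 8*p28 + 8*p216 + 8*p48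
      + 8*p416 + 8*p816 + 4*key
  -- positivity of x
  have hc2 : Real.sqrt 2 / 2 ≤ Real.cos (2*θ) := by
    rw [← Real.cos_pi_div_four]
    apply Real.cos_le_cos_of_nonneg_of_le_pi (by positivity)
      (by linarith [Real.pi_pos]) (by rw [hθ]; linarith [Real.pi_pos])
  have hc4 : Real.sqrt 2 / 2 ≤ Real.cos (4*θ) := by
    rw [← Real.cos_pi_div_four]
    apply Real.cos_le_cos_of_nonneg_of_le_pi (by positivity)
      (by linarith [Real.pi_pos]) (by rw [hθ]; linarith [Real.pi_pos])
  have hc8 : 0 ≤ Real.cos (8*θ) := by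
    apply Real.cos_nonneg_of_mem_Icc
    rw [Set.mem_Icc, hθ]
    constructor <;> linarith [Real.pi_pos]
  have hc16 : -1 ≤ Real.cos (16*θ) := Real.neg_one_le_cos _
  have hs2 : (1.4:ℝ) ≤ Real.sqrt 2 := by
    have h : Real.sqrt 1.96 ≤ Real.sqrt 2 := Real.sqrt_le_sqrt (by norm_num)
    rwa [show (1.96:ℝ) = 1.4^2 by norm_num, Real.sqrt_sq (by norm_num)] at h
  have hxpos : 0 ≤ x := by rw [hx]; linarith [hc2, hc4, hc8, hc16, hs2]
  -- conclude
  have hsqrt : Real.sqrt 17 = 2*x + 1 := by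
    rw [show (17:ℝ) = (2*x+1)^2 by linear_combination (-4)*hquad,
        Real.sqrt_sq (by linarith)]
  rw [show 2 * Real.pi / 17 = 2*θ by rw [hθ]; ring,
      show 4 * Real.pi / 17 = 4*θ by rw [hθ]; ring,
      show 8 * Real.pi / 17 = 8*θ by rw [hθ]; ring,
      show 16 * Real.pi / 17 = 16*θ by rw [hθ]; ring, hsqrt]
  rw [hx]; ring
end

section
/- (2·cos(2π/17) + 2·cos(8π/17)) · (2·cos(4π/17) + 2·cos(16π/17)) = −1. -/
open Real

lemma sum17 : ∑ k ∈ Finset.range 17, Real.cos (2 * Real.pi * k / 17) = 0 := by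
  have h2 : (2 : ℂ) * Real.pi * Complex.I ≠ 0 := by
    simp [Real.pi_ne_zero, Complex.I_ne_zero, Complex.ofReal_ne_zero]
  have hz : Complex.exp (2 * Real.pi * Complex.I / 17) ≠ 1 := by
    intro h
    rw [Complex.exp_eq_one_iff] at h
    obtain ⟨n, hn⟩ := h
    have h1 : (1 : ℂ) * (2 * Real.pi * Complex.I) = (17 * n) * (2 * Real.pi * Complex.I) := by
      linear_combination (17 : ℂ) * hn
    have : (1 : ℂ) = 17 * n := mul_right_cancel₀ h2 h1
    have : (1 : ℤ) = 17 * n := by exact_mod_cast this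
    omega
  have hgeom : ∑ k ∈ Finset.range 17, Complex.exp (2 * Real.pi * Complex.I / 17) ^ k = 0 := by
    rw [geom_sum_eq hz]
    have h17 : (17 : ℂ) * (2 * Real.pi * Complex.I / 17) = 2 * Real.pi * Complex.I := by ring
    rw [← Complex.exp_nat_mul]
    push_cast
    rw [h17, Complex.exp_two_pi_mul_I]
    simp
  have hre : ∀ k : ℕ, (Complex.exp (2 * Real.pi * Complex.I / 17) ^ k).re
      = Real.cos (2 * Real.pi * k / 17) := by
    intro k
    rw [← Complex.exp_nat_mul]
    have : (k : ℂ) * (2 * Real.pi * Complex.I / 17)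
        = ((2 * Real.pi * k / 17 : ℝ) : ℂ) * Complex.I := by
      push_cast; ring
    rw [this, Complex.exp_ofReal_mul_I_re]
  calc ∑ k ∈ Finset.range 17, Real.cos (2 * Real.pi * k / 17)
      = (∑ k ∈ Finset.range 17, Complex.exp (2 * Real.pi * Complex.I / 17) ^ k).re := by
        rw [Complex.re_sum]
        exact Finset.sum_congr rfl fun k _ => (hre k).symm
    _ = 0 := by rw [hgeom]; rfl

lemma hS : Real.cos (2*π/17) + Real.cos (4*π/17) + Real.cos (6*π/17) + Real.cos (8*π/17)
    + Real.cos (10*π/17) + Real.cos (12*π/17) + Real.cos (14*π/17) + Real.cos (16*π/17) = -1/2 := by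
  have h := sum17
  simp [Finset.sum_range_succ] at h
  ring_nf at h
  have e : ∀ a b : ℝ, a = 2*π - b → Real.cos a = Real.cos b := by
    rintro a b rfl; exact Real.cos_two_pi_sub b
  rw [e (π*(18/17)) (π*(16/17)) (by ring), e (π*(20/17)) (π*(14/17)) (by ring),
      e (π*(22/17)) (π*(12/17)) (by ring), e (π*(24/17)) (π*(10/17)) (by ring),
      e (π*(26/17)) (π*(8/17)) (by ring), e (π*(28/17)) (π*(6/17)) (by ring),
      e (π*(30/17)) (π*(4/17)) (by ring), e (π*(32/17)) (π*(2/17)) (by ring)] at h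
  ring_nf at h ⊢
  linarith

/-- `(2 cos(2π/17) + 2 cos(8π/17)) · (2 cos(4π/17) + 2 cos(16π/17)) = -1`. -/
theorem stmt15 :
    (2 * Real.cos (2 * Real.pi / 17) + 2 * Real.cos (8 * Real.pi / 17)) *
      (2 * Real.cos (4 * Real.pi / 17) + 2 * Real.cos (16 * Real.pi / 17)) = -1 := by
  have e : ∀ a b : ℝ, a = 2*π - b → Real.cos a = Real.cos b := by
    rintro a b rfl; exact Real.cos_two_pi_sub b
  have hps : ∀ a b : ℝ, Real.cos a * Real.cos b * 2 = Real.cos (a+b) + Real.cos (a-b) := by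
    intro a b; rw [Real.cos_add, Real.cos_sub]; ring
  have h12 := hps (4*π/17) (2*π/17)
  have h18 := hps (16*π/17) (2*π/17)
  have h24 := hps (8*π/17) (4*π/17)
  have h48 := hps (16*π/17) (8*π/17)
  have h := hS
  ring_nf at h12 h18 h24 h48 h ⊢
  rw [e (π*(18/17)) (π*(16/17)) (by ring)] at h18
  rw [e (π*(24/17)) (π*(10/17)) (by ring)] at h48
  linarith
end

section
/- Let G₁ = (−1 + √17)/2, P₁ = (G₁ + √(G₁² + 4))/2 and P₂ = (G₁ − √(G₁² + 4))/2. Then 2·cos(2π/17) = (P₁ + √(2·P₂ − P₁² + 8))/2. -/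
set_option maxHeartbeats 1000000


/-- With `G₁ = (-1 + √17) / 2`, `P₁ = (G₁ + √(G₁² + 4)) / 2` and
`P₂ = (G₁ - √(G₁² + 4)) / 2`, one has `2 cos(2π/17) = (P₁ + √(2 P₂ - P₁² + 8)) / 2`. -/
theorem stmt16 (G₁ P₁ P₂ : ℝ) (hG : G₁ = (-1 + Real.sqrt 17) / 2)
    (hP₁ : P₁ = (G₁ + Real.sqrt (G₁ ^ 2 + 4)) / 2)
    (hP₂ : P₂ = (G₁ - Real.sqrt (G₁ ^ 2 + 4)) / 2) :
    2 * Real.cos (2 * Real.pi / 17) = (P₁ + Real.sqrt (2 * P₂ - P₁ ^ 2 + 8)) / 2 := by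
  have hπ := Real.pi_pos
  set φ : ℝ := Real.pi / 17 with hφ
  -- product-to-sum
  have pm : ∀ a b : ℝ, (2*Real.cos a) * (2*Real.cos b) = 2*Real.cos (a+b) + 2*Real.cos (a-b) := by
    intro a b; rw [Real.cos_add, Real.cos_sub]; ring
  have fold : ∀ x : ℝ, Real.cos (2*Real.pi - x) = Real.cos x := by
    intro x; rw [Real.cos_sub, Real.cos_two_pi, Real.sin_two_pi]; ring
  -- product identities
  have h11 : (2*Real.cos (2*φ)) * (2*Real.cos (2*φ)) = 2*Real.cos (4*φ) + 2 := by
    have h := pm (2*φ) (2*φ)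
    rw [show 2*φ+2*φ = 4*φ by ring, show 2*φ-2*φ = 0 by ring, Real.cos_zero] at h
    linarith
  have h22 : (2*Real.cos (4*φ)) * (2*Real.cos (4*φ)) = 2*Real.cos (8*φ) + 2 := by
    have h := pm (4*φ) (4*φ)
    rw [show 4*φ+4*φ = 8*φ by ring, show 4*φ-4*φ = 0 by ring, Real.cos_zero] at h
    linarith
  have h44 : (2*Real.cos (8*φ)) * (2*Real.cos (8*φ)) = 2*Real.cos (16*φ) + 2 := by
    have h := pm (8*φ) (8*φ)
    rw [show 8*φ+8*φ = 16*φ by ring, show 8*φ-8*φ = 0 by ring, Real.cos_zero] at h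
    linarith
  have h88 : (2*Real.cos (16*φ)) * (2*Real.cos (16*φ)) = 2*Real.cos (2*φ) + 2 := by
    have h := pm (16*φ) (16*φ)
    rw [show 16*φ+16*φ = 2*Real.pi - 2*φ by rw [hφ]; ring, fold,
        show 16*φ-16*φ = 0 by ring, Real.cos_zero] at h
    linarith
  have h12 : (2*Real.cos (2*φ)) * (2*Real.cos (4*φ)) = 2*Real.cos (6*φ) + 2*Real.cos (2*φ) := by
    have h := pm (2*φ) (4*φ)
    rw [show 2*φ+4*φ = 6*φ by ring, show 2*φ-4*φ = -(2*φ) by ring, Real.cos_neg] at h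
    linarith
  have h14 : (2*Real.cos (2*φ)) * (2*Real.cos (8*φ)) = 2*Real.cos (10*φ) + 2*Real.cos (6*φ) := by
    have h := pm (2*φ) (8*φ)
    rw [show 2*φ+8*φ = 10*φ by ring, show 2*φ-8*φ = -(6*φ) by ring, Real.cos_neg] at h
    linarith
  have h18 : (2*Real.cos (2*φ)) * (2*Real.cos (16*φ)) = 2*Real.cos (16*φ) + 2*Real.cos (14*φ) := by
    have h := pm (2*φ) (16*φ)
    rw [show 2*φ+16*φ = 2*Real.pi - 16*φ by rw [hφ]; ring, fold,
        show 2*φ-16*φ = -(14*φ) by ring, Real.cos_neg] at h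
    linarith
  have h24 : (2*Real.cos (4*φ)) * (2*Real.cos (8*φ)) = 2*Real.cos (12*φ) + 2*Real.cos (4*φ) := by
    have h := pm (4*φ) (8*φ)
    rw [show 4*φ+8*φ = 12*φ by ring, show 4*φ-8*φ = -(4*φ) by ring, Real.cos_neg] at h
    linarith
  have h28 : (2*Real.cos (4*φ)) * (2*Real.cos (16*φ)) = 2*Real.cos (14*φ) + 2*Real.cos (12*φ) := by
    have h := pm (4*φ) (16*φ)
    rw [show 4*φ+16*φ = 2*Real.pi - 14*φ by rw [hφ]; ring, fold,
        show 4*φ-16*φ = -(12*φ) by ring, Real.cos_neg] at h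
    linarith
  have h48 : (2*Real.cos (8*φ)) * (2*Real.cos (16*φ)) = 2*Real.cos (10*φ) + 2*Real.cos (8*φ) := by
    have h := pm (8*φ) (16*φ)
    rw [show 8*φ+16*φ = 2*Real.pi - 10*φ by rw [hφ]; ring, fold,
        show 8*φ-16*φ = -(8*φ) by ring, Real.cos_neg] at h
    linarith
  -- the sum of all eight cosines is -1
  have hsinpos : 0 < Real.sin φ := by
    apply Real.sin_pos_of_pos_of_lt_pi
    · rw [hφ]; positivity
    · rw [hφ]; linarith
  have key : ∀ x : ℝ, (2*Real.cos x) * Real.sin φ = Real.sin (x + φ) - Real.sin (x - φ) := by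
    intro x; rw [Real.sin_add, Real.sin_sub]; ring
  have k1 := key (2*φ); rw [show 2*φ+φ = 3*φ by ring, show 2*φ-φ = φ by ring] at k1
  have k2 := key (4*φ); rw [show 4*φ+φ = 5*φ by ring, show 4*φ-φ = 3*φ by ring] at k2
  have k3 := key (6*φ); rw [show 6*φ+φ = 7*φ by ring, show 6*φ-φ = 5*φ by ring] at k3
  have k4 := key (8*φ); rw [show 8*φ+φ = 9*φ by ring, show 8*φ-φ = 7*φ by ring] at k4
  have k5 := key (10*φ); rw [show 10*φ+φ = 11*φ by ring, show 10*φ-φ = 9*φ by ring] at k5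
  have k6 := key (12*φ); rw [show 12*φ+φ = 13*φ by ring, show 12*φ-φ = 11*φ by ring] at k6
  have k7 := key (14*φ); rw [show 14*φ+φ = 15*φ by ring, show 14*φ-φ = 13*φ by ring] at k7
  have k8 := key (16*φ)
  rw [show 16*φ+φ = Real.pi by rw [hφ]; ring, Real.sin_pi,
      show 16*φ-φ = 15*φ by ring] at k8
  have hsum : 2*Real.cos (2*φ) + 2*Real.cos (4*φ) + 2*Real.cos (6*φ) + 2*Real.cos (8*φ)
      + 2*Real.cos (10*φ) + 2*Real.cos (12*φ) + 2*Real.cos (14*φ) + 2*Real.cos (16*φ) = -1 := by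
    have hz : (2*Real.cos (2*φ) + 2*Real.cos (4*φ) + 2*Real.cos (6*φ) + 2*Real.cos (8*φ)
        + 2*Real.cos (10*φ) + 2*Real.cos (12*φ) + 2*Real.cos (14*φ) + 2*Real.cos (16*φ) + 1)
        * Real.sin φ = 0 := by
      linear_combination k1 + k2 + k3 + k4 + k5 + k6 + k7 + k8
    rcases mul_eq_zero.mp hz with h | h
    · linarith
    · exact absurd h (ne_of_gt hsinpos)
  -- positivity facts
  have hx1pos : 0 < Real.cos (2*φ) := by
    apply Real.cos_pos_of_mem_Ioo (Set.mem_Ioo.mpr ⟨by rw [hφ]; linarith, by rw [hφ]; linarith⟩)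
  have hx2pos : 0 < Real.cos (4*φ) := by
    apply Real.cos_pos_of_mem_Ioo (Set.mem_Ioo.mpr ⟨by rw [hφ]; linarith, by rw [hφ]; linarith⟩)
  have hx4pos : 0 < Real.cos (8*φ) := by
    apply Real.cos_pos_of_mem_Ioo (Set.mem_Ioo.mpr ⟨by rw [hφ]; linarith, by rw [hφ]; linarith⟩)
  have hx8gt : -1 < Real.cos (16*φ) := by
    have h1 : Real.cos φ < Real.cos 0 := by
      apply Real.cos_lt_cos_of_nonneg_of_le_pi le_rfl (by rw [hφ]; linarith)
      rw [hφ]; positivity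
    rw [Real.cos_zero] at h1
    rw [show 16*φ = Real.pi - φ by rw [hφ]; ring, Real.cos_pi_sub]
    linarith
  have hx14 : Real.cos (8*φ) ≤ Real.cos (2*φ) := by
    apply Real.cos_le_cos_of_nonneg_of_le_pi (by rw [hφ]; positivity) (by rw [hφ]; linarith)
    rw [hφ]; linarith
  -- sqrt 17 facts
  have h17 : Real.sqrt 17 ^ 2 = 17 := Real.sq_sqrt (by norm_num)
  have h17gt : 3 < Real.sqrt 17 := by
    rw [Real.lt_sqrt (by norm_num)]; norm_num
  -- identify G₁ with the period
  set G : ℝ := 2*Real.cos (2*φ) + 2*Real.cos (4*φ) + 2*Real.cos (8*φ) + 2*Real.cos (16*φ) with hGdef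
  have hGq : G^2 + G - 4 = 0 := by
    rw [hGdef]
    linear_combination h11 + h22 + h44 + h88 + 2*h12 + 2*h14 + 2*h18 + 2*h24 + 2*h28 + 2*h48 + 4*hsum
  have hGgt : -2 < G := by rw [hGdef]; linarith [hx1pos, hx2pos, hx4pos, hx8gt]
  have hGfac : (G - (-1 + Real.sqrt 17)/2) * (G - (-1 - Real.sqrt 17)/2) = 0 := by
    linear_combination hGq - (1/4) * h17
  have hGval : G₁ = G := by
    rcases mul_eq_zero.mp hGfac with h | h
    · rw [hG]; linarith [sub_eq_zero.mp h]
    · exfalso; have h' := sub_eq_zero.mp h; linarith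
  -- the degree-4 periods
  set P : ℝ := 2*Real.cos (2*φ) + 2*Real.cos (8*φ) with hPdef
  set Q : ℝ := 2*Real.cos (4*φ) + 2*Real.cos (16*φ) with hQdef
  have hPQsum : P + Q = G₁ := by rw [hGval, hGdef, hPdef, hQdef]; ring
  have hPQprod : P * Q = -1 := by
    rw [hPdef, hQdef]
    linear_combination h12 + h18 + h24 + h48 + hsum
  have hPpos : 0 < P := by rw [hPdef]; linarith [hx1pos, hx4pos]
  have hQneg : Q < 0 := by
    have hpq : P * Q < 0 := by rw [hPQprod]; norm_num
    rcases mul_neg_iff.mp hpq with ⟨_, h2⟩ | ⟨h1, _⟩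
    · exact h2
    · linarith
  set s : ℝ := Real.sqrt (G₁^2 + 4) with hsdef
  have hs0 : 0 ≤ s := Real.sqrt_nonneg _
  have hs2 : s^2 = G₁^2 + 4 := Real.sq_sqrt (by positivity)
  have hsval : s = P - Q := by
    have h0 : (s - (P - Q)) * (s + (P - Q)) = 0 := by
      linear_combination hs2 - (G₁ + P + Q) * hPQsum + 4 * hPQprod
    rcases mul_eq_zero.mp h0 with h | h
    · linarith [sub_eq_zero.mp h]
    · exfalso; linarith
  have hP1 : P₁ = P := by rw [hP₁]; linarith
  have hP2 : P₂ = Q := by rw [hP₂]; linarith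
  -- the inner radical
  have hrad : 2 * P₂ - P₁ ^ 2 + 8 = (2*Real.cos (2*φ) - 2*Real.cos (8*φ))^2 := by
    rw [hP1, hP2, hPdef, hQdef]
    linear_combination (-2) * h11 + (-2) * h44
  rw [hrad, Real.sqrt_sq (by linarith), hP1, hPdef,
      show 2 * Real.pi / 17 = 2*φ by rw [hφ]; ring]
  ring
end

section
/- For n ∈ {257, 65537} and any unit q of ZMod n, the subgroup of (ZMod n)ˣ generated by 2 and q is the whole unit group if and only if q does not belong to the subgroup of (ZMod n)ˣ generated by 2 and 9. (Equivalently: q is an appropriate factor for building all doubling orbits exactly when q lies in an even-numbered orbit Ĝ_{2k}, i.e. in a coset 3^(2k−1)·⟨2⟩.) -/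
private lemma key {G : Type*} [CommGroup G] [Finite G] (m : ℕ)
    (hcard : Nat.card G = 2 ^ (m + 1)) (g : G) (hg : orderOf g = 2 ^ (m + 1))
    (a : G) (k : ℕ) (ha : a = (g ^ 2) ^ k) (q : G) :
    Subgroup.closure {a, q} = ⊤ ↔ q ∉ Subgroup.closure {a, g ^ 2} := by
  have hamem : a ∈ Subgroup.zpowers (g ^ 2) :=
    Subgroup.mem_zpowers_iff.mpr ⟨(k : ℤ), by rw [zpow_natCast, ha]⟩
  have hgtop : Subgroup.zpowers g = ⊤ := by
    apply Subgroup.eq_top_of_card_eq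
    rw [Nat.card_zpowers, hg, hcard]
  have hsub : Subgroup.closure {a, g ^ 2} = Subgroup.zpowers (g ^ 2) := by
    apply le_antisymm
    · rw [Subgroup.closure_le]
      rintro x (rfl | rfl)
      · exact hamem
      · exact Subgroup.mem_zpowers_iff.mpr ⟨1, by simp⟩
    · rw [Subgroup.zpowers_le]
      exact Subgroup.subset_closure (by simp)
  have hZne : Subgroup.zpowers (g ^ 2) ≠ ⊤ := by
    intro htop
    have h1 : orderOf (g ^ 2) = Nat.card G := by
      rw [← Nat.card_zpowers, htop, Subgroup.card_top]
    have h2 : orderOf (g ^ 2) ∣ 2 ^ m := by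
      rw [orderOf_dvd_iff_pow_eq_one, ← pow_mul, ← pow_succ', ← hg]
      exact pow_orderOf_eq_one g
    have h3 : Nat.card G ≤ 2 ^ m := h1 ▸ Nat.le_of_dvd (by positivity) h2
    rw [hcard, pow_succ] at h3
    have : 0 < 2 ^ m := by positivity
    omega
  have hmem : ∀ x : G, x ^ (2 ^ m : ℕ) = 1 → x ∈ Subgroup.zpowers (g ^ 2) := by
    intro x hx
    obtain ⟨j, hj⟩ := Subgroup.mem_zpowers_iff.mp (hgtop ▸ Subgroup.mem_top x)
    have h1 : g ^ (j * ((2 : ℤ) ^ m)) = 1 := by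
      rw [zpow_mul, hj, show ((2 : ℤ) ^ m) = ((2 ^ m : ℕ) : ℤ) by push_cast; ring,
        zpow_natCast, hx]
    have h2 : ((2 : ℤ) ^ (m + 1)) ∣ j * (2 : ℤ) ^ m := by
      have := orderOf_dvd_iff_zpow_eq_one.mpr h1
      rw [hg] at this
      exact_mod_cast this
    obtain ⟨t, ht⟩ := h2
    have h2m : ((2 : ℤ) ^ m) ≠ 0 := by positivity
    have hj2 : j = 2 * t := by
      apply mul_right_cancel₀ h2m
      rw [ht, pow_succ]; ring
    refine Subgroup.mem_zpowers_iff.mpr ⟨t, ?_⟩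
    have hz : (g ^ 2) ^ t = g ^ (2 * t : ℤ) := by
      rw [← zpow_natCast g 2, ← zpow_mul]; norm_num
    rw [hz, ← hj2, hj]
  constructor
  · intro htop hq
    rw [hsub] at hq
    have hle : Subgroup.closure {a, q} ≤ Subgroup.zpowers (g ^ 2) := by
      rw [Subgroup.closure_le]
      rintro x (rfl | rfl)
      · exact hamem
      · exact hq
    rw [htop] at hle
    exact hZne (top_le_iff.mp hle)
  · intro hq
    by_contra hne
    apply hq
    rw [hsub]
    apply hmem
    have hqmem : q ∈ Subgroup.closure {a, q} := Subgroup.subset_closure (by simp)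
    have hdvd : Nat.card (Subgroup.closure {a, q}) ∣ 2 ^ (m + 1) :=
      hcard ▸ Subgroup.card_subgroup_dvd_card _
    obtain ⟨i, hi, hHc⟩ := (Nat.dvd_prime_pow Nat.prime_two).mp hdvd
    have him : i ≤ m := by
      rcases Nat.lt_or_ge i (m + 1) with h | h
      · omega
      · exfalso
        apply hne
        apply Subgroup.eq_top_of_card_eq
        rw [hHc, hcard]
        congr 1
        omega
    have h1 : orderOf q ∣ 2 ^ m :=
      dvd_trans (hHc ▸ Subgroup.orderOf_dvd_natCard _ hqmem) (pow_dvd_pow 2 him)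
    exact orderOf_dvd_iff_pow_eq_one.mp h1

/-- For `n ∈ {257, 65537}` and any unit `q` of `ZMod n`, the subgroup of
`(ZMod n)ˣ` generated by `2` and `q` is the whole unit group if and only if `q` does not
belong to the subgroup generated by `2` and `9`. -/
theorem stmt17 (n : ℕ) (hn : n = 257 ∨ n = 65537) (q : (ZMod n)ˣ) :
    Subgroup.closure {u : (ZMod n)ˣ | (u : ZMod n) = 2 ∨ u = q} = ⊤ ↔
      q ∉ Subgroup.closure {u : (ZMod n)ˣ | (u : ZMod n) = 2 ∨ (u : ZMod n) = 9} := by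
  rcases hn with rfl | rfl
  · set g : (ZMod 257)ˣ := ZMod.unitOfCoprime 3 (by norm_num) with hgdef
    have hgval : (g : ZMod 257) = 3 := by
      rw [hgdef, ZMod.coe_unitOfCoprime]; norm_num
    set a : (ZMod 257)ˣ := ZMod.unitOfCoprime 2 (by norm_num) with hadef
    have haval : (a : ZMod 257) = 2 := by
      rw [hadef, ZMod.coe_unitOfCoprime]; norm_num
    have hg2val : ((g ^ 2 : (ZMod 257)ˣ) : ZMod 257) = 9 := by
      rw [Units.val_pow_eq_pow_val, hgval]; norm_num
    have hset1 : {u : (ZMod 257)ˣ | (u : ZMod 257) = 2 ∨ u = q} = ({a, q} : Set _) := by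
      ext u
      simp only [Set.mem_setOf_eq, Set.mem_insert_iff, Set.mem_singleton_iff]
      constructor
      · rintro (h | h)
        · exact Or.inl (Units.ext (h.trans haval.symm))
        · exact Or.inr h
      · rintro (rfl | rfl)
        · exact Or.inl haval
        · exact Or.inr rfl
    have hset2 : {u : (ZMod 257)ˣ | (u : ZMod 257) = 2 ∨ (u : ZMod 257) = 9}
        = ({a, g ^ 2} : Set _) := by
      ext u
      simp only [Set.mem_setOf_eq, Set.mem_insert_iff, Set.mem_singleton_iff]
      constructor
      · rintro (h | h)
        · exact Or.inl (Units.ext (h.trans haval.symm))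
        · exact Or.inr (Units.ext (h.trans hg2val.symm))
      · rintro (rfl | rfl)
        · exact Or.inl haval
        · exact Or.inr hg2val
    rw [hset1, hset2]
    apply key 7
    · rw [Nat.card_eq_fintype_card, ZMod.card_units_eq_totient,
        Nat.totient_prime (by norm_num)]
      norm_num
    · apply orderOf_eq_prime_pow (p := 2) (n := 7)
      · intro h
        have hcv := congrArg Units.val h
        rw [Units.val_pow_eq_pow_val, hgval, Units.val_one] at hcv
        have h128 : (3 : ZMod 257) ^ (2 ^ 7 : ℕ) = 256 := by
          have he : (2 ^ 7 : ℕ) = 2*2*2*2*2*2*2 := by norm_num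
          rw [he]; simp only [pow_mul]; decide
        rw [h128] at hcv
        exact absurd hcv (by decide)
      · apply Units.ext
        rw [Units.val_pow_eq_pow_val, hgval, Units.val_one]
        have he : (2 ^ 8 : ℕ) = 2*2*2*2*2*2*2*2 := by norm_num
        rw [he]; simp only [pow_mul]; decide
    · show a = (g ^ 2) ^ 24
      apply Units.ext
      rw [Units.val_pow_eq_pow_val, hg2val, haval]
      decide
  · set g : (ZMod 65537)ˣ := ZMod.unitOfCoprime 3 (by norm_num) with hgdef
    have hgval : (g : ZMod 65537) = 3 := by
      rw [hgdef, ZMod.coe_unitOfCoprime]; norm_num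
    set a : (ZMod 65537)ˣ := ZMod.unitOfCoprime 2 (by norm_num) with hadef
    have haval : (a : ZMod 65537) = 2 := by
      rw [hadef, ZMod.coe_unitOfCoprime]; norm_num
    have hg2val : ((g ^ 2 : (ZMod 65537)ˣ) : ZMod 65537) = 9 := by
      rw [Units.val_pow_eq_pow_val, hgval]; norm_num
    have hset1 : {u : (ZMod 65537)ˣ | (u : ZMod 65537) = 2 ∨ u = q} = ({a, q} : Set _) := by
      ext u
      simp only [Set.mem_setOf_eq, Set.mem_insert_iff, Set.mem_singleton_iff]
      constructor
      · rintro (h | h)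
        · exact Or.inl (Units.ext (h.trans haval.symm))
        · exact Or.inr h
      · rintro (rfl | rfl)
        · exact Or.inl haval
        · exact Or.inr rfl
    have hset2 : {u : (ZMod 65537)ˣ | (u : ZMod 65537) = 2 ∨ (u : ZMod 65537) = 9}
        = ({a, g ^ 2} : Set _) := by
      ext u
      simp only [Set.mem_setOf_eq, Set.mem_insert_iff, Set.mem_singleton_iff]
      constructor
      · rintro (h | h)
        · exact Or.inl (Units.ext (h.trans haval.symm))
        · exact Or.inr (Units.ext (h.trans hg2val.symm))
      · rintro (rfl | rfl)
        · exact Or.inl haval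
        · exact Or.inr hg2val
    rw [hset1, hset2]
    apply key 15
    · rw [Nat.card_eq_fintype_card, ZMod.card_units_eq_totient,
        Nat.totient_prime (by norm_num)]
      norm_num
    · apply orderOf_eq_prime_pow (p := 2) (n := 15)
      · intro h
        have hcv := congrArg Units.val h
        rw [Units.val_pow_eq_pow_val, hgval, Units.val_one] at hcv
        have h32768 : (3 : ZMod 65537) ^ (2 ^ 15 : ℕ) = 65536 := by
          have he : (2 ^ 15 : ℕ) = 2*2*2*2*2*2*2*2*2*2*2*2*2*2*2 := by norm_num
          rw [he]; simp only [pow_mul]; decide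
        rw [h32768] at hcv
        exact absurd hcv (by decide)
      · apply Units.ext
        rw [Units.val_pow_eq_pow_val, hgval, Units.val_one]
        have he : (2 ^ 16 : ℕ) = 2*2*2*2*2*2*2*2*2*2*2*2*2*2*2*2 := by norm_num
        rw [he]; simp only [pow_mul]; decide
    · show a = (g ^ 2) ^ 27648
      apply Units.ext
      rw [Units.val_pow_eq_pow_val, hg2val, haval]
      have he : (27648 : ℕ) = 27*(2*2*2*2*2*2*2*2*2*2) := by norm_num
      rw [he, pow_mul]
      simp only [pow_mul]
      decide
end
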